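/- arXiv:1701.07992 — 5 statements merged into one kernel-verified Lean document; each statement's English description precedes it below -/
import Mathlib

section
/- Let H and G be real normed vector spaces, let s < T be real numbers, and let V : ℝ → H be a function whose total variation on the interval [s,T] is finite, with total variation value τ < ∞. Then for every ε > 0 one has ∫_s^T ‖V(min(t+ε,T)) − V(t)‖ dt ≤ ε · τ. -/
open MeasureTheory

/-- Fubini-type estimate: if `V : ℝ → H` has finite total variation `τ` on `[s,T]`,
then `∫_s^T ‖V(min(t+ε,T)) − V(t)‖ dt ≤ ε * τ`. -/
theorem bounded_variation_integral_increment_le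
    {H G : Type*} [NormedAddCommGroup H] [NormedSpace ℝ H]
    [NormedAddCommGroup G] [NormedSpace ℝ G]
    (s T : ℝ) (hsT : s < T) (V : ℝ → H) (τ : ENNReal)
    (hτ : eVariationOn V (Set.Icc s T) = τ) (hfin : τ < ⊤) :
    ∀ ε > (0 : ℝ), ∫ t in s..T, ‖V (min (t + ε) T) - V t‖ ≤ ε * τ.toReal := by
  intro ε hε
  have hbv : BoundedVariationOn V (Set.Icc s T) := by
    rw [BoundedVariationOn, hτ]; exact hfin.ne
  have hlbv : LocallyBoundedVariationOn V (Set.Icc s T) :=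
    hbv.locallyBoundedVariationOn
  have hsS : s ∈ Set.Icc s T := ⟨le_rfl, hsT.le⟩
  have hcmem : ∀ u : ℝ, min (max u s) T ∈ Set.Icc s T := fun u =>
    ⟨le_min (le_max_right u s) hsT.le, min_le_right _ _⟩
  have hcmono : Monotone (fun u : ℝ => min (max u s) T) := fun a b hab =>
    min_le_min (max_le_max hab le_rfl) le_rfl
  set w : ℝ → ℝ :=
    fun u => variationOnFromTo V (Set.Icc s T) s (min (max u s) T) with hw
  have hwmono : Monotone w := fun a b hab =>
    variationOnFromTo.monotoneOn hlbv hsS (hcmem a) (hcmem b) (hcmono hab)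
  have hwint : ∀ a b : ℝ, IntervalIntegrable w volume a b := fun a b =>
    hwmono.intervalIntegrable
  have hwnonneg : ∀ u, 0 ≤ w u := fun u =>
    variationOnFromTo.nonneg_of_le V _ (hcmem u).1
  have hwε : IntervalIntegrable (fun t => w (t + ε)) volume s T := by
    simpa using (hwint (s + ε) (T + ε)).comp_add_right ε
  -- pointwise bound
  have hpt : ∀ t ∈ Set.Icc s T, ‖V (min (t + ε) T) - V t‖ ≤ w (t + ε) - w t := by
    intro t ht
    have hs' : s ≤ t + ε := le_trans ht.1 (by linarith)
    have hct : min (max t s) T = t := by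
      rw [max_eq_left ht.1, min_eq_left ht.2]
    have hcte : min (max (t + ε) s) T = min (t + ε) T := by
      rw [max_eq_left hs']
    have htb : t ≤ min (t + ε) T := le_min (by linarith) ht.2
    have hbS : min (t + ε) T ∈ Set.Icc s T :=
      ⟨le_trans ht.1 htb, min_le_right _ _⟩
    have h1 : ‖V (min (t + ε) T) - V t‖
        ≤ variationOnFromTo V (Set.Icc s T) t (min (t + ε) T) := by
      rw [variationOnFromTo.eq_of_le V _ htb]
      have h0 := eVariationOn.edist_le V (x := min (t + ε) T) (y := t)
        (Set.mem_inter hbS (Set.mem_Icc.mpr ⟨htb, le_rfl⟩))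
        (Set.mem_inter ht (Set.mem_Icc.mpr ⟨le_rfl, htb⟩))
      have hne : eVariationOn V (Set.Icc s T ∩ Set.Icc t (min (t + ε) T)) ≠ ⊤ :=
        hbv.mono Set.inter_subset_left
      rw [edist_dist] at h0
      calc ‖V (min (t + ε) T) - V t‖ = dist (V (min (t + ε) T)) (V t) :=
            (dist_eq_norm _ _).symm
        _ ≤ _ := by
            rw [← ENNReal.toReal_ofReal dist_nonneg]
            exact ENNReal.toReal_mono hne h0
    have h2 := variationOnFromTo.add hlbv hsS ht hbS
    simp only [hw, hct, hcte]
    linarith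
  by_cases hint : IntervalIntegrable (fun t => ‖V (min (t + ε) T) - V t‖) volume s T
  · have hg : IntervalIntegrable (fun t => w (t + ε) - w t) volume s T :=
      hwε.sub (hwint s T)
    refine le_trans (intervalIntegral.integral_mono_on hsT.le hint hg hpt) ?_
    have hsplit : (∫ t in s..T, (w (t + ε) - w t))
        = (∫ t in T..(T + ε), w t) - ∫ t in s..(s + ε), w t := by
      rw [intervalIntegral.integral_sub hwε (hwint s T)]
      have h1 : (∫ t in s..T, w (t + ε)) = ∫ t in (s + ε)..(T + ε), w t :=
        intervalIntegral.integral_comp_add_right w ε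
      have h2 : (∫ t in (s + ε)..T, w t) + (∫ t in T..(T + ε), w t)
          = ∫ t in (s + ε)..(T + ε), w t :=
        intervalIntegral.integral_add_adjacent_intervals (hwint _ _) (hwint _ _)
      have h3 : (∫ t in s..(s + ε), w t) + (∫ t in (s + ε)..T, w t)
          = ∫ t in s..T, w t :=
        intervalIntegral.integral_add_adjacent_intervals (hwint _ _) (hwint _ _)
      rw [h1, ← h2, ← h3]; ring
    rw [hsplit]
    have htop : (∫ t in T..(T + ε), w t) = ε * τ.toReal := by
      have hcong : ∀ t ∈ Set.uIcc T (T + ε), w t = τ.toReal := by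
        intro t ht
        rw [Set.uIcc_of_le (by linarith)] at ht
        simp only [hw]
        rw [max_eq_left (le_trans hsT.le ht.1), min_eq_right ht.1,
          variationOnFromTo.eq_of_le V _ hsT.le,
          Set.inter_eq_left.mpr (fun x hx => hx), hτ]
      rw [intervalIntegral.integral_congr hcong, intervalIntegral.integral_const]
      simp [mul_comm]
    have hlo : 0 ≤ ∫ t in s..(s + ε), w t :=
      intervalIntegral.integral_nonneg (by linarith) (fun u _ => hwnonneg u)
    rw [htop]
    linarith
  · rw [intervalIntegral.integral_undef hint]
    positivity
end

section
/- Let H and G be real normed vector spaces, let s < T be real numbers, let V : ℝ → H have finite total variation on [s,T], and let Z : ℝ → G be continuous on [s,T]. Then lim_{ε→0⁺} (1/ε) ∫_s^T ‖V(min(t+ε,T)) − V(t)‖ · ‖Z(min(t+ε,T)) − Z(t)‖ dt = 0. -/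
open MeasureTheory Filter Topology

/-- The analytic core of Lemma 2.6: if `V : ℝ → H` has finite total variation on `[s,T]`
and `Z : ℝ → G` is continuous on `[s,T]`, then
`(1/ε) ∫_s^T ‖V(min(t+ε,T)) − V(t)‖ · ‖Z(min(t+ε,T)) − Z(t)‖ dt → 0` as `ε → 0⁺`. -/
theorem bounded_variation_times_continuous_increment_tendsto_zero
    {H G : Type*} [NormedAddCommGroup H] [NormedSpace ℝ H]
    [NormedAddCommGroup G] [NormedSpace ℝ G]
    (s T : ℝ) (hsT : s < T) (V : ℝ → H) (Z : ℝ → G)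
    (hV : eVariationOn V (Set.Icc s T) < ⊤)
    (hZ : ContinuousOn Z (Set.Icc s T)) :
    Tendsto
      (fun ε : ℝ =>
        (1 / ε) * ∫ t in s..T,
          ‖V (min (t + ε) T) - V t‖ * ‖Z (min (t + ε) T) - Z t‖)
      (𝓝[>] 0) (𝓝 0) := by
  set C : ℝ := (eVariationOn V (Set.Icc s T)).toReal with hC
  have hC0 : 0 ≤ C := ENNReal.toReal_nonneg
  set g : ℝ → ℝ := fun t => (eVariationOn V (Set.Icc s (min t T))).toReal with hg
  have hfin : ∀ t, eVariationOn V (Set.Icc s (min t T)) ≠ ⊤ := fun t =>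
    (lt_of_le_of_lt (eVariationOn.mono V (Set.Icc_subset_Icc_right (min_le_right _ _))) hV).ne
  have hfin2 : ∀ a b : ℝ, s ≤ a → b ≤ T → eVariationOn V (Set.Icc a b) ≠ ⊤ := by
    intro a b ha hb
    by_cases hab : a ≤ b
    · refine (lt_of_le_of_lt (eVariationOn.mono V ?_) hV).ne
      exact Set.Icc_subset_Icc ha hb
    · rw [Set.Icc_eq_empty hab]
      simp [eVariationOn.subsingleton]
  have hg_mono : Monotone g := by
    intro a b hab
    exact ENNReal.toReal_mono (hfin b)
      (eVariationOn.mono V (Set.Icc_subset_Icc_right (min_le_min_right T hab)))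
  have hg_nonneg : ∀ t, 0 ≤ g t := fun t => ENNReal.toReal_nonneg
  have hgT : ∀ t, T ≤ t → g t = C := by
    intro t ht
    simp only [hg, min_eq_right ht, hC]
  -- key variation estimate
  have key : ∀ t u : ℝ, s ≤ t → t ≤ u → u ≤ T → ‖V u - V t‖ ≤ g u - g t := by
    intro t u hst htu huT
    have hsu : s ≤ u := hst.trans htu
    have hsum := eVariationOn.Icc_add_Icc V (s := Set.Icc s T) hst htu
      ⟨hst, htu.trans huT⟩
    rw [Set.inter_eq_self_of_subset_right (Set.Icc_subset_Icc_right (htu.trans huT)),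
      Set.inter_eq_self_of_subset_right (Set.Icc_subset_Icc hst huT),
      Set.inter_eq_self_of_subset_right (Set.Icc_subset_Icc_right huT)] at hsum
    have h1 : g u - g t = (eVariationOn V (Set.Icc t u)).toReal := by
      simp only [hg, min_eq_left huT, min_eq_left (htu.trans huT)]
      rw [← hsum, ENNReal.toReal_add (hfin2 s t le_rfl (htu.trans huT)) (hfin2 t u hst huT)]
      ring
    rw [h1]
    have h2 : edist (V u) (V t) ≤ eVariationOn V (Set.Icc t u) :=
      eVariationOn.edist_le V ⟨htu, le_rfl⟩ ⟨le_rfl, htu⟩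
    have := ENNReal.toReal_mono (hfin2 t u hst huT) h2
    rwa [edist_dist, ENNReal.toReal_ofReal dist_nonneg, dist_eq_norm] at this
  -- uniform continuity of Z
  have hUC : UniformContinuousOn Z (Set.Icc s T) :=
    isCompact_Icc.uniformContinuousOn_of_continuous hZ
  rw [Metric.tendsto_nhds]
  intro δ hδ
  set δ' : ℝ := δ / (2 * (C + 1)) with hδ'def
  have hδ' : 0 < δ' := by positivity
  obtain ⟨η, hη, hηZ⟩ := Metric.uniformContinuousOn_iff.mp hUC δ' hδ'
  have hm : 0 < min η (T - s) := lt_min hη (by linarith)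
  filter_upwards [Ioo_mem_nhdsGT_of_mem (Set.mem_Ico.mpr ⟨le_rfl, hm⟩)] with ε hε
  obtain ⟨hε0, hεm⟩ := hε
  have hεη : ε < η := lt_of_lt_of_le hεm (min_le_left _ _)
  have hεT : ε < T - s := lt_of_lt_of_le hεm (min_le_right _ _)
  -- pointwise bound
  have hpt : ∀ t ∈ Set.Icc s T,
      ‖V (min (t + ε) T) - V t‖ * ‖Z (min (t + ε) T) - Z t‖ ≤ (g (t + ε) - g t) * δ' := by
    intro t ⟨hts, htT⟩
    set u := min (t + ε) T with hu
    have htu : t ≤ u := le_min (by linarith) htT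
    have huT : u ≤ T := min_le_right _ _
    have huIcc : u ∈ Set.Icc s T := ⟨hts.trans htu, huT⟩
    have hgu : g u = g (t + ε) := by
      simp only [hg, hu, min_assoc, min_self]
    have h1 : ‖V u - V t‖ ≤ g (t + ε) - g t := by
      rw [← hgu]; exact key t u hts htu huT
    have h2 : ‖Z u - Z t‖ ≤ δ' := by
      have hd : dist u t < η := by
        rw [Real.dist_eq, abs_of_nonneg (by linarith)]
        have : u ≤ t + ε := min_le_left _ _
        linarith
      exact le_of_lt (by rw [← dist_eq_norm]; exact hηZ u huIcc t ⟨hts, htT⟩ hd)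
    have hb1 : 0 ≤ g (t + ε) - g t := sub_nonneg.mpr (hg_mono (by linarith))
    exact mul_le_mul h1 h2 (norm_nonneg _) hb1
  -- integral of the dominating function
  have hgi : ∀ a b : ℝ, IntervalIntegrable g volume a b := fun a b =>
    hg_mono.intervalIntegrable
  have hgi' : ∀ a b : ℝ, IntervalIntegrable (fun t => g (t + ε)) volume a b := fun a b =>
    (hg_mono.comp (fun x y hxy => by simpa using add_le_add_right hxy ε : Monotone
      (fun t : ℝ => t + ε))).intervalIntegrable
  have hBint : IntervalIntegrable (fun t => (g (t + ε) - g t) * δ') volume s T :=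
    ((hgi' s T).sub (hgi s T)).mul_const _
  have hIB : (∫ t in s..T, (g (t + ε) - g t) * δ') ≤ ε * C * δ' := by
    have hsplit : (∫ t in s..T, (g (t + ε) - g t)) =
        (∫ t in T..(T + ε), g t) - ∫ t in s..(s + ε), g t := by
      rw [intervalIntegral.integral_sub (hgi' s T) (hgi s T),
        intervalIntegral.integral_comp_add_right g ε]
      have e1 : (∫ t in s..(s+ε), g t) + ∫ t in (s+ε)..(T+ε), g t = ∫ t in s..(T+ε), g t :=
        intervalIntegral.integral_add_adjacent_intervals (hgi _ _) (hgi _ _)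
      have e2 : (∫ t in s..T, g t) + ∫ t in T..(T+ε), g t = ∫ t in s..(T+ε), g t :=
        intervalIntegral.integral_add_adjacent_intervals (hgi _ _) (hgi _ _)
      linarith
    have hTconst : (∫ t in T..(T + ε), g t) = ε * C := by
      rw [intervalIntegral.integral_congr (g := fun _ => C) ?_]
      · simp only [intervalIntegral.integral_const, smul_eq_mul, add_sub_cancel_left]
      · intro x hx
        rw [Set.uIcc_of_le (by linarith)] at hx
        exact hgT x hx.1
    have hs0 : 0 ≤ ∫ t in s..(s + ε), g t :=
      intervalIntegral.integral_nonneg (by linarith) (fun u _ => hg_nonneg u)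
    have : (∫ t in s..T, (g (t + ε) - g t)) ≤ ε * C := by
      rw [hsplit, hTconst]; linarith
    calc (∫ t in s..T, (g (t + ε) - g t) * δ')
        = (∫ t in s..T, (g (t + ε) - g t)) * δ' := by
          rw [← intervalIntegral.integral_mul_const]
      _ ≤ ε * C * δ' := by
          exact mul_le_mul_of_nonneg_right this hδ'.le
  -- the actual integral
  have hI : (∫ t in s..T, ‖V (min (t + ε) T) - V t‖ * ‖Z (min (t + ε) T) - Z t‖)
      ≤ ε * C * δ' := by
    by_cases hint : IntervalIntegrable
        (fun t => ‖V (min (t + ε) T) - V t‖ * ‖Z (min (t + ε) T) - Z t‖) volume s T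
    · refine le_trans ?_ hIB
      exact intervalIntegral.integral_mono_on hsT.le hint hBint hpt
    · rw [intervalIntegral.integral_undef hint]
      positivity
  have hI0 : 0 ≤ ∫ t in s..T, ‖V (min (t + ε) T) - V t‖ * ‖Z (min (t + ε) T) - Z t‖ :=
    intervalIntegral.integral_nonneg hsT.le
      (fun u _ => mul_nonneg (norm_nonneg _) (norm_nonneg _))
  have hF : (1 / ε) * (∫ t in s..T,
      ‖V (min (t + ε) T) - V t‖ * ‖Z (min (t + ε) T) - Z t‖) ≤ C * δ' := by
    rw [div_mul_eq_mul_div, one_mul, div_le_iff₀ hε0] at *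
    calc (∫ t in s..T, ‖V (min (t + ε) T) - V t‖ * ‖Z (min (t + ε) T) - Z t‖)
        ≤ ε * C * δ' := hI
      _ = C * δ' * ε := by ring
  have hCδ : C * δ' < δ := by
    rw [hδ'def]
    rw [mul_div_assoc']
    rw [div_lt_iff₀ (by positivity)]
    nlinarith
  rw [Real.dist_eq, sub_zero, abs_of_nonneg (mul_nonneg (by positivity) hI0)]
  exact lt_of_le_of_lt hF hCδ
end

section
/- Let H be a real Hilbert space with inner product ⟪·,·⟫, let ψ, φ ∈ H, let α, ρ, s ∈ ℝ and x ∈ H. Define Θ : ℝ → ℝ by Θ(t) = 1 if t ≥ 0 and Θ(t) = 0 if t < 0, and set p := 2α e^{−ρs} max(⟪x,ψ⟫,0) ψ. Then the function a ↦ a·⟪p,φ⟫ + e^{−ρs} Θ(⟪x,ψ⟫) a² on ℝ has infimum equal to −α² e^{−ρs} max(⟪x,ψ⟫,0)² ⟪ψ,φ⟫², and this infimum is attained. -/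
open RealInnerProductSpace

/-- Along the gradient `p = 2α e^{−ρs} max(⟪x,ψ⟫,0) ψ`, the infimum of the current-value
Hamiltonian `a ↦ a⟪p,φ⟫ + e^{−ρs}Θ(⟪x,ψ⟫)a²` equals
`−α² e^{−ρs} max(⟪x,ψ⟫,0)² ⟪ψ,φ⟫²` and is attained. -/
theorem hamiltonian_along_gradient_attained
    {H : Type*} [NormedAddCommGroup H] [InnerProductSpace ℝ H]
    (ψ φ : H) (α ρ s : ℝ) (x : H) (Θ : ℝ → ℝ)
    (hΘ : ∀ t : ℝ, Θ t = if 0 ≤ t then 1 else 0)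
    (p : H) (hp : p = (2 * α * Real.exp (-(ρ * s)) * max ⟪x, ψ⟫ 0) • ψ) :
    IsLeast
      (Set.range fun a : ℝ => a * ⟪p, φ⟫ + Real.exp (-(ρ * s)) * Θ ⟪x, ψ⟫ * a ^ 2)
      (-(α ^ 2) * Real.exp (-(ρ * s)) * max ⟪x, ψ⟫ 0 ^ 2 * ⟪ψ, φ⟫ ^ 2) := by
  have hE : (0:ℝ) < Real.exp (-(ρ * s)) := Real.exp_pos _
  by_cases h : 0 ≤ ⟪x, ψ⟫
  · have hmax : max ⟪x, ψ⟫ 0 = ⟪x, ψ⟫ := max_eq_left h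
    have hΘc : Θ ⟪x, ψ⟫ = 1 := by rw [hΘ]; simp [h]
    have hpφ : ⟪p, φ⟫ = 2 * α * Real.exp (-(ρ * s)) * ⟪x, ψ⟫ * ⟪ψ, φ⟫ := by
      rw [hp, hmax, real_inner_smul_left]
    constructor
    · exact ⟨-(α * ⟪x, ψ⟫ * ⟪ψ, φ⟫), by rw [hpφ, hΘc, hmax]; ring⟩
    · rintro y ⟨a, rfl⟩
      simp only [hpφ, hΘc, hmax]
      nlinarith [mul_nonneg hE.le (sq_nonneg (a + α * ⟪x, ψ⟫ * ⟪ψ, φ⟫))]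
  · have hmax : max ⟪x, ψ⟫ 0 = 0 := max_eq_right (le_of_lt (not_le.mp h))
    have hΘc : Θ ⟪x, ψ⟫ = 0 := by rw [hΘ]; simp [h]
    have hp0 : p = 0 := by rw [hp, hmax]; simp
    constructor
    · exact ⟨0, by simp [hp0, hΘc, hmax]⟩
    · rintro y ⟨a, rfl⟩
      simp [hp0, hΘc, hmax]
end

section
/- Let H be a real Hilbert space with inner product ⟪·,·⟫, let ψ, φ ∈ H with ⟪φ,ψ⟫ ≠ 0, let ρ, λ, β ∈ ℝ, and set α := (−ρ + 2λ + β²)/⟪φ,ψ⟫². Define v : ℝ × H → ℝ by v(s,x) = α e^{−ρs} max(⟪x,ψ⟫,0)². Then for every s ∈ ℝ and every x ∈ H with ⟪x,ψ⟫ ≠ 0, the map y ↦ v(s,y) is twice Fréchet differentiable at x, and writing D_x v(s,x) for its first Fréchet derivative and D²_x v(s,x) for its second, the identity −ρ·v(s,x) + λ·(D_x v(s,x))(x) + (β²/2)·(D²_x v(s,x))(x,x) − (e^{ρs}/4)·((D_x v(s,x))(φ))² = 0 holds. -/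
open RealInnerProductSpace Filter Topology

/-!
Off the hyperplane `⟪x, ψ⟫ = 0` the function `max ⟪x, ψ⟫ 0 ^ 2` coincides near `x` with either `0`
or `⟪x, ψ⟫ ^ 2`, so near `x` the function `v s` is a quadratic form `k ⟪·, ψ⟫ ^ 2` with `k = 0` or
`k = α e^{-ρs}`. For such a form `Dv(x) = 2k⟪x,ψ⟫ ⟪·,ψ⟫` and `D²v = 2k ⟪·,ψ⟫ ⟪·,ψ⟫`, and the HJB
residual is `k ⟪x,ψ⟫² (-ρ + 2λ + β² - e^{ρs} k ⟪φ,ψ⟫²)`, which vanishes by the choice of `α`.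
-/

theorem eventuallyEq_max_zero_sq {X : Type*} [TopologicalSpace X] {g : X → ℝ} {x : X}
    (hg : ContinuousAt g x) (hx : g x ≠ 0) :
    ∃ a ∈ ({0, 1} : Set ℝ), (fun y => max (g y) 0 ^ 2) =ᶠ[𝓝 x] fun y => a * g y ^ 2 := by
  rcases hx.lt_or_gt with hneg | hpos
  · refine ⟨0, by simp, ?_⟩
    filter_upwards [hg.eventually (gt_mem_nhds hneg)] with y hy
    simp [max_eq_right hy.le]
  · refine ⟨1, by simp, ?_⟩
    filter_upwards [hg.eventually (lt_mem_nhds hpos)] with y hy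
    simp [max_eq_left hy.le]

section QuadraticOfFunctional

variable {E : Type*} [NormedAddCommGroup E] [NormedSpace ℝ E] (L : E →L[ℝ] ℝ) (k : ℝ)

theorem hasFDerivAt_const_mul_sq (y : E) :
    HasFDerivAt (fun z => k * L z ^ 2) (((2 * k) • L).smulRight L y) y := by
  refine ((L.hasFDerivAt.pow 2).const_mul k).congr_fderiv ?_
  ext z
  simp only [ContinuousLinearMap.smulRight_apply, smul_apply, smul_eq_mul,
    nsmul_eq_mul, Nat.cast_ofNat, Nat.add_one_sub_one, pow_one]
  ring

theorem fderiv_const_mul_sq :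
    fderiv ℝ (fun z => k * L z ^ 2) = ((2 * k) • L).smulRight L :=
  funext fun y => (hasFDerivAt_const_mul_sq L k y).fderiv

end QuadraticOfFunctional

theorem hjb_residual_const_mul_sq_eq_zero {ρ lam β k m p e : ℝ}
    (hk : k = 0 ∨ e * k * p ^ 2 = -ρ + 2 * lam + β ^ 2) :
    -ρ * (k * m ^ 2) + lam * (2 * k * m * m) + β ^ 2 / 2 * (2 * k * m * m)
      - e / 4 * (2 * k * m * p) ^ 2 = 0 := by
  rcases hk with rfl | hk
  · simp
  · linear_combination (-(k * m ^ 2)) * hk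

/-- Off the hyperplane `⟪x,ψ⟫ = 0`, the function `v(s,x) = α e^{−ρs} max(⟪x,ψ⟫,0)²`
(with `α = (−ρ + 2λ + β²)/⟪φ,ψ⟫²`) is twice Fréchet differentiable in `x` and solves
`−ρ v + λ (D_x v)(x) + (β²/2)(D²_x v)(x,x) − (e^{ρs}/4)((D_x v)(φ))² = 0`. -/
theorem candidate_value_function_solves_HJB_off_hyperplane
    {H : Type*} [NormedAddCommGroup H] [InnerProductSpace ℝ H]
    (ψ φ : H) (hφψ : ⟪φ, ψ⟫ ≠ 0) (ρ lam β α : ℝ)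
    (hα : α = (-ρ + 2 * lam + β ^ 2) / ⟪φ, ψ⟫ ^ 2)
    (v : ℝ → H → ℝ)
    (hv : ∀ (s : ℝ) (x : H), v s x = α * Real.exp (-(ρ * s)) * max ⟪x, ψ⟫ 0 ^ 2) :
    ∀ (s : ℝ) (x : H), ⟪x, ψ⟫ ≠ 0 →
      (∀ᶠ y in 𝓝 x, DifferentiableAt ℝ (v s) y) ∧
        DifferentiableAt ℝ (fderiv ℝ (v s)) x ∧
        -ρ * v s x + lam * fderiv ℝ (v s) x x
            + β ^ 2 / 2 * fderiv ℝ (fderiv ℝ (v s)) x x x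
            - Real.exp (ρ * s) / 4 * (fderiv ℝ (v s) x φ) ^ 2 = 0 := by
  intro s x hx
  set L := innerSL ℝ ψ
  have hL (y : H) : L y = ⟪y, ψ⟫ := real_inner_comm _ _
  obtain ⟨a, ha, hmax⟩ := eventuallyEq_max_zero_sq L.continuous.continuousAt (hL x ▸ hx)
  set k := α * Real.exp (-(ρ * s)) * a
  have hloc : v s =ᶠ[𝓝 x] fun y => k * L y ^ 2 := by
    filter_upwards [hmax] with y hy
    rw [hv, ← hL, hy]
    ring
  set G := ((2 * k) • L).smulRight L
  have hfd : fderiv ℝ (v s) =ᶠ[𝓝 x] G :=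
    (hloc.fderiv (𝕜 := ℝ)).trans (.of_eq (fderiv_const_mul_sq L k))
  refine ⟨hloc.eventuallyEq_nhds.mono fun y hy =>
      (hasFDerivAt_const_mul_sq L k y).differentiableAt.congr_of_eventuallyEq hy,
    G.differentiableAt.congr_of_eventuallyEq hfd, ?_⟩
  have hk : k = 0 ∨ Real.exp (ρ * s) * k * ⟪φ, ψ⟫ ^ 2 = -ρ + 2 * lam + β ^ 2 := by
    rcases ha with rfl | rfl
    · simp [k]
    · right
      calc Real.exp (ρ * s) * (α * Real.exp (-(ρ * s)) * 1) * ⟪φ, ψ⟫ ^ 2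
          = α * ⟪φ, ψ⟫ ^ 2 := by rw [Real.exp_neg]; field_simp
        _ = -ρ + 2 * lam + β ^ 2 := by rw [hα]; field_simp
  rw [hloc.eq_of_nhds, hfd.eq_of_nhds, hfd.fderiv_eq, G.fderiv]
  simpa [G, hL, mul_assoc] using hjb_residual_const_mul_sq_eq_zero (m := ⟪x, ψ⟫) hk
end

section
/- Let H be a real Hilbert space with inner product ⟪·,·⟫, let ψ, φ ∈ H with ⟪φ,ψ⟫ ≠ 0, let ρ, λ, β ∈ ℝ, let γ > 0, and set α_γ := (−ρ + (2+γ)λ + (β²/2)(2+γ)(1+γ)) / (−(1/4)(2+γ)²⟪φ,ψ⟫²). Define w : ℝ × H → ℝ by w(s,x) = α_γ e^{−ρs} max(⟪x,ψ⟫,0)^{2+γ} and h : ℝ × H → ℝ by h(s,x) = −(1/4) α_γ² (2+γ)² ⟪φ,ψ⟫² e^{−ρs} max(⟪x,ψ⟫,0)^{2+γ}. Then for every (s,x) ∈ ℝ × H the map y ↦ w(s,y) is twice Fréchet differentiable at x and, writing D_x w(s,x) and D²_x w(s,x) for its first and second Fréchet derivatives, the identity −ρ·w(s,x) + λ·(D_x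 w(s,x))(x) + (β²/2)·(D²_x w(s,x))(x,x) = h(s,x) holds. -/
open RealInnerProductSpace Filter Topology

lemma maxpow_hasDerivAt {q : ℝ} (hq : 1 < q) (t : ℝ) :
    HasDerivAt (fun t : ℝ => max t 0 ^ q) (q * max t 0 ^ (q - 1)) t := by
  rcases lt_trichotomy t 0 with ht | rfl | ht
  · have hev : ∀ᶠ y in nhds t, max y 0 ^ q = (0 : ℝ) := by
      filter_upwards [eventually_lt_nhds ht] with y hy
      rw [max_eq_right hy.le, Real.zero_rpow (by linarith)]
    have : HasDerivAt (fun _ : ℝ => (0:ℝ)) 0 t := hasDerivAt_const t 0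
    have h2 := this.congr_of_eventuallyEq (hev.mono fun y hy => hy)
    simpa [max_eq_right ht.le, Real.zero_rpow (show q - 1 ≠ 0 by linarith)] using h2
  · rw [hasDerivAt_iff_isLittleO]
    simp only [max_self, Real.zero_rpow (show q - 1 ≠ 0 by linarith), mul_zero, sub_zero,
      smul_zero, Real.zero_rpow (show q ≠ 0 by linarith)]
    rw [Asymptotics.isLittleO_iff_tendsto]
    · have hb : Filter.Tendsto (fun y : ℝ => |y| ^ (q - 1)) (nhds 0) (nhds 0) := by
        have h1 : ContinuousAt (fun y : ℝ => |y| ^ (q - 1)) 0 :=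
          (Real.continuousAt_rpow_const (|(0:ℝ)|) (q-1) (Or.inr (by linarith))).comp
            (continuous_abs.continuousAt)
        simpa [Real.zero_rpow (show q - 1 ≠ 0 by linarith)] using h1.tendsto
      apply squeeze_zero_norm _ hb
      intro y
      rcases le_or_gt y 0 with hy | hy
      · simp [max_eq_right hy, Real.zero_rpow (show q ≠ 0 by linarith)]
        positivity
      · rw [max_eq_left hy.le]
        have : y ^ q / y = y ^ (q - 1) := by
          rw [Real.rpow_sub hy, Real.rpow_one]
        rw [this, Real.norm_eq_abs, abs_of_nonneg (Real.rpow_nonneg hy.le _),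
          abs_of_pos hy]
    · intro y hy
      simp [hy, Real.zero_rpow (show q ≠ 0 by linarith)]
  · have hev : ∀ᶠ y in nhds t, y ^ q = max y 0 ^ q := by
      filter_upwards [eventually_gt_nhds ht] with y hy
      rw [max_eq_left hy.le]
    have h1 := Real.hasDerivAt_rpow_const (p := q) (Or.inl ht.ne')
    have h2 := h1.congr_of_eventuallyEq (hev.mono fun y hy => hy.symm)
    simpa [max_eq_left ht.le] using h2

/-- Each approximating function `w(s,x) = α_γ e^{−ρs} max(⟪x,ψ⟫,0)^{2+γ}` is everywhere
twice Fréchet differentiable in `x` and solves the approximating linear equation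
`−ρ w + λ (D_x w)(x) + (β²/2)(D²_x w)(x,x) = h(s,x)`. -/
theorem approximating_function_solves_linear_equation
    {H : Type*} [NormedAddCommGroup H] [InnerProductSpace ℝ H]
    (ψ φ : H) (hφψ : ⟪φ, ψ⟫ ≠ 0) (ρ lam β γ : ℝ) (hγ : 0 < γ) (αγ : ℝ)
    (hαγ : αγ = (-ρ + (2 + γ) * lam + β ^ 2 / 2 * (2 + γ) * (1 + γ)) /
        (-(1 / 4) * (2 + γ) ^ 2 * ⟪φ, ψ⟫ ^ 2))
    (w : ℝ → H → ℝ)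
    (hw : ∀ (s : ℝ) (x : H),
      w s x = αγ * Real.exp (-(ρ * s)) * max ⟪x, ψ⟫ 0 ^ (2 + γ))
    (h : ℝ → H → ℝ)
    (hh : ∀ (s : ℝ) (x : H),
      h s x = -(1 / 4) * αγ ^ 2 * (2 + γ) ^ 2 * ⟪φ, ψ⟫ ^ 2 * Real.exp (-(ρ * s)) *
        max ⟪x, ψ⟫ 0 ^ (2 + γ)) :
    ∀ (s : ℝ) (x : H),
      (∀ᶠ y in 𝓝 x, DifferentiableAt ℝ (w s) y) ∧
        DifferentiableAt ℝ (fderiv ℝ (w s)) x ∧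
        -ρ * w s x + lam * fderiv ℝ (w s) x x
            + β ^ 2 / 2 * fderiv ℝ (fderiv ℝ (w s)) x x x = h s x := by
  intro s x
  have hp1 : (1:ℝ) < 2 + γ := by linarith
  have hp2 : (1:ℝ) < (2 + γ) - 1 := by linarith
  set C := αγ * Real.exp (-(ρ * s)) with hC
  set L : H →L[ℝ] ℝ := innerSL ℝ ψ with hLdef
  have hLx : ∀ y : H, L y = ⟪y, ψ⟫ := by
    intro y; rw [hLdef, innerSL_apply_apply]; exact real_inner_comm y ψ
  have hws : w s = fun y => C * max (L y) 0 ^ (2 + γ) := by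
    funext y; rw [hw, hLx]
  -- first derivative
  have hd1 : ∀ y : H, HasFDerivAt (w s)
      ((C * ((2 + γ) * max (L y) 0 ^ ((2 + γ) - 1))) • L) y := by
    intro y
    rw [hws]
    have := (((maxpow_hasDerivAt hp1 (L y)).comp_hasFDerivAt y L.hasFDerivAt).const_mul C)
    simpa [smul_smul] using this
  have hf1 : fderiv ℝ (w s) =
      fun y => (C * ((2 + γ) * max (L y) 0 ^ ((2 + γ) - 1))) • L :=
    funext fun y => (hd1 y).fderiv
  -- second derivative
  set M : ℝ →L[ℝ] (H →L[ℝ] ℝ) := (ContinuousLinearMap.id ℝ ℝ).smulRight L with hM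
  have hc : HasFDerivAt (fun y => C * ((2 + γ) * max (L y) 0 ^ ((2 + γ) - 1)))
      ((C * ((2 + γ) * (((2 + γ) - 1) * max (L x) 0 ^ (((2 + γ) - 1) - 1)))) • L) x := by
    have := ((((maxpow_hasDerivAt hp2 (L x)).comp_hasFDerivAt x L.hasFDerivAt).const_mul
      (2 + γ)).const_mul C)
    simpa [smul_smul, mul_assoc] using this
  have hd2 : HasFDerivAt (fderiv ℝ (w s))
      (M.comp ((C * ((2 + γ) * (((2 + γ) - 1) * max (L x) 0 ^ (((2 + γ) - 1) - 1)))) • L)) x := by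
    rw [hf1]
    exact M.hasFDerivAt.comp x hc
  refine ⟨Eventually.of_forall fun y => (hd1 y).differentiableAt, hd2.differentiableAt, ?_⟩
  rw [(hd1 x).fderiv, hd2.fderiv]
  set t := ⟪x, ψ⟫ with ht
  set m := max t 0 with hm
  have hLxx : L x = t := hLx x
  have key1 : m ^ ((2 + γ) - 1) * t = m ^ (2 + γ) := by
    rcases le_or_gt t 0 with hty | hty
    · rw [hm, max_eq_right hty, Real.zero_rpow (by linarith), Real.zero_rpow (by linarith),
        zero_mul]
    · rw [hm, max_eq_left hty.le]
      rw [Real.rpow_sub hty, Real.rpow_one, div_mul_cancel₀]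
      exact hty.ne'
  have key2 : m ^ (((2 + γ) - 1) - 1) * t * t = m ^ (2 + γ) := by
    rcases le_or_gt t 0 with hty | hty
    · rw [hm, max_eq_right hty, Real.zero_rpow (by linarith), Real.zero_rpow (by linarith)]
      ring
    · rw [hm, max_eq_left hty.le]
      rw [Real.rpow_sub hty, Real.rpow_sub hty, Real.rpow_one]
      field_simp
  have hden : (-(1 / 4) * (2 + γ) ^ 2 * ⟪φ, ψ⟫ ^ 2) ≠ 0 := by
    refine mul_ne_zero (mul_ne_zero (by norm_num) (pow_ne_zero 2 (by linarith))) ?_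
    exact pow_ne_zero 2 hφψ
  have hnum : -ρ + (2 + γ) * lam + β ^ 2 / 2 * (2 + γ) * (1 + γ) =
      αγ * (-(1 / 4) * (2 + γ) ^ 2 * ⟪φ, ψ⟫ ^ 2) := by
    rw [hαγ, div_mul_cancel₀ _ hden]
  rw [hw, hh]
  simp only [ContinuousLinearMap.smul_apply, ContinuousLinearMap.coe_comp',
    Function.comp_apply, hLxx, smul_eq_mul, hM, ContinuousLinearMap.smulRight_apply,
    ContinuousLinearMap.id_apply]
  rw [← ht, ← hm, ← hC]
  linear_combination (C * lam * (2 + γ)) * key1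
    + (C * (β ^ 2 / 2) * (2 + γ) * ((2 + γ) - 1)) * key2
    + (C * m ^ (2 + γ)) * hnum
end
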